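/- arXiv:1801.02278 — 6 statements merged into one kernel-verified Lean document; each statement's English description precedes it below -/
import Mathlib

section
/- Let v = (n_1,…,n_k) be a non-decreasing sequence of naturals of length k, and let X_v^max be defined via the functions f_j(0) = n_j and f_j(m) = n_k + m for m ≥ 1, by X_v^max = { (f_1(m_1),…,f_k(m_k)) : m_1 ≤ … ≤ m_k naturals }. Then a non-decreasing sequence w = (m_1,…,m_k) belongs to X_v^max if and only if either m_1 > n_k, or there exists 1 ≤ i ≤ k such that (m_1,…,m_i) = (n_1,…,n_i) and, if i < k, then m_{i+1} > n_k. -/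
/-- Non-decreasing list of naturals. -/
abbrev NonDec (l : List ℕ) : Prop := l.Chain' (· ≤ ·)

/-- The order `≺` on nondecreasing sequences: the empty sequence is minimal;
nonempty sequences are compared by last entry, with lexicographic tie-breaking. -/
def prec (s t : List ℕ) : Prop :=
  (s = [] ∧ t ≠ []) ∨
  (s ≠ [] ∧ t ≠ [] ∧ (s.getLast! < t.getLast! ∨
    (s.getLast! = t.getLast! ∧ List.Lex (· < ·) s t)))

/-- The map `X̂_v`: `(m_1,…,m_l) ↦ (f_1(m_1),…,f_l(m_l))` where
`f_j(0) = n_j` and `f_j(m) = n_k + m` for `m ≥ 1`, `v = (n_1,…,n_k)`. -/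
def Xhat (v s : List ℕ) : List ℕ :=
  List.zipWith (fun a b => if b = 0 then a else v.getLast! + b) (v.take s.length) s

/-- The set `X_v^max`, described by its characterization:
`w ∈ X_v^max` iff `w` is nondecreasing of the same length as `v` and either
`w_1 > n_k`, or there is `1 ≤ i ≤ k` with `(w_1,…,w_i) = (n_1,…,n_i)` and
(if `i < k`) `w_{i+1} > n_k`. -/
def XmaxSet (v : List ℕ) : Set (List ℕ) :=
  { w | w.length = v.length ∧ NonDec w ∧
    (v.getLast! < w.headI ∨
      ∃ i, 1 ≤ i ∧ i ≤ v.length ∧ w.take i = v.take i ∧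
        (i < v.length → v.getLast! < w.getD i 0)) }

/-! A non-decreasing `m` is a block of zeros followed by positive entries, and `Xhat v` copies `v`
on the zero block and lifts each positive entry `m_j` to `n_k + m_j`. So the image of `Xhat v`
consists of the non-decreasing `w` that agree with `v` on a prefix and exceed `n_k` afterwards.
The defining condition of `XmaxSet v` says the same, because for non-decreasing `w` it suffices
to check the first entry after the prefix. -/

theorem List.headI_mem {α : Type*} [Inhabited α] {l : List α} (h : l ≠ []) : l.headI ∈ l := by
  cases l <;> simp_all

theorem List.headI_drop {α : Type*} [Inhabited α] (l : List α) (i : ℕ) :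
    (l.drop i).headI = l.getD i default := by
  induction l generalizing i with
  | nil => simp
  | cons a t ih => cases i <;> simp [ih]

theorem NonDec.lt_of_lt_headI {l : List ℕ} (hl : NonDec l) {n : ℕ} (h : n < l.headI) :
    ∀ x ∈ l, n < x := by
  cases l with
  | nil => simp
  | cons a t =>
    have ha : ∀ x ∈ t, a ≤ x := (List.pairwise_cons.mp (List.isChain_iff_pairwise.mp hl)).1
    simp only [List.headI_cons] at h
    simp only [List.mem_cons, forall_eq_or_imp]
    exact ⟨h, fun x hx => h.trans_le (ha x hx)⟩

theorem NonDec.exists_eq_replicate_zero_append {m : List ℕ} (hm : NonDec m) :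
    ∃ i m', m = List.replicate i 0 ++ m' ∧ ∀ x ∈ m', 0 < x := by
  induction m with
  | nil => exact ⟨0, [], rfl, by simp⟩
  | cons a t ih =>
    rcases Nat.eq_zero_or_pos a with rfl | ha
    · obtain ⟨i, m', rfl, hpos⟩ := ih hm.tail
      exact ⟨i + 1, m', rfl, hpos⟩
    · exact ⟨0, a :: t, rfl, hm.lt_of_lt_headI ha⟩

theorem Xhat_replicate_zero_append {v m : List ℕ} {i : ℕ} (hm : i + m.length = v.length)
    (hpos : ∀ x ∈ m, 0 < x) :
    Xhat v (List.replicate i 0 ++ m) = v.take i ++ m.map (v.getLast! + ·) := by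
  have hi : (v.take i).length = (List.replicate i 0).length := by grind
  rw [Xhat, List.length_append, List.length_replicate, hm, List.take_length,
    ← List.take_append_drop i v, List.zipWith_append hi, List.take_append_drop]
  congr 1
  · refine List.ext_getElem (by simp) fun j _ _ => ?_
    simp
  · refine List.ext_getElem (by grind) fun j _ hj => ?_
    rw [List.length_map] at hj
    simp [(hpos m[j] (List.getElem_mem hj)).ne']

theorem exists_nonDec_Xhat_eq_iff {v w : List ℕ} (hw : NonDec w) :
    (∃ m, NonDec m ∧ m.length = v.length ∧ w = Xhat v m) ↔
      w.length = v.length ∧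
        ∃ i ≤ v.length, w.take i = v.take i ∧ ∀ x ∈ w.drop i, v.getLast! < x := by
  constructor
  · rintro ⟨m, hm, hml, rfl⟩
    obtain ⟨i, m', rfl, hpos⟩ := hm.exists_eq_replicate_zero_append
    have hlen : i + m'.length = v.length := by simpa using hml
    have hi : (v.take i).length = i := by grind
    rw [Xhat_replicate_zero_append hlen hpos]
    refine ⟨by grind, i, by omega, List.take_left' hi, ?_⟩
    rw [List.drop_left' hi, List.forall_mem_map]
    exact fun x hx => Nat.lt_add_of_pos_right (hpos x hx)
  · rintro ⟨hwl, i, hi, htake, hdrop⟩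
    have hpos : ∀ x ∈ (w.drop i).map (· - v.getLast!), 0 < x := by
      rw [List.forall_mem_map]
      exact fun x hx => Nat.sub_pos_of_lt (hdrop x hx)
    refine ⟨List.replicate i 0 ++ (w.drop i).map (· - v.getLast!), ?_, by grind, ?_⟩
    · refine List.isChain_append.mpr ⟨List.isChain_replicate_of_rel _ le_rfl,
        List.isChain_map_of_isChain (· - v.getLast!) (fun _ _ h => Nat.sub_le_sub_right h _)
          (hw.drop i), ?_⟩
      exact fun x hx _ _ =>
        (List.eq_of_mem_replicate (List.mem_of_getLast? hx)).symm ▸ Nat.zero_le _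
    · rw [Xhat_replicate_zero_append (by grind) hpos, List.map_map, ← htake,
        List.map_congr_left (g := id) ?_, List.map_id, List.take_append_drop]
      exact fun x hx => Nat.add_sub_of_le (hdrop x hx).le

theorem mem_XmaxSet_iff_take_eq {v w : List ℕ} (hv : v ≠ []) (hw : NonDec w) :
    w ∈ XmaxSet v ↔
      w.length = v.length ∧
        ∃ i ≤ v.length, w.take i = v.take i ∧ ∀ x ∈ w.drop i, v.getLast! < x := by
  simp only [XmaxSet, Set.mem_ofPred_eq, and_iff_right hw]
  refine and_congr_right fun hwl => ⟨?_, ?_⟩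
  · rintro (hhead | ⟨i, -, hi, htake, hnext⟩)
    · exact ⟨0, Nat.zero_le _, by simp, by simpa using hw.lt_of_lt_headI hhead⟩
    · refine ⟨i, hi, htake, ?_⟩
      rcases hi.lt_or_eq with hlt | rfl
      · exact NonDec.lt_of_lt_headI (hw.drop i) (by rw [List.headI_drop]; exact hnext hlt)
      · simp [List.drop_eq_nil_of_le hwl.le]
  · rintro ⟨i, hi, htake, hdrop⟩
    have hnext : i < v.length → v.getLast! < w.getD i 0 := fun h =>
      hdrop _ (List.headI_drop w i ▸ List.headI_mem (by simp; omega))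
    rcases Nat.eq_zero_or_pos i with rfl | hpos
    · left
      rw [← List.drop_zero (l := w), List.headI_drop]
      exact hnext (List.length_pos_iff.mpr hv)
    · exact Or.inr ⟨i, hpos, hi, htake, hnext⟩

theorem mem_XmaxSet_iff_general (k : ℕ) (hk : 2 ≤ k) (v w : List ℕ)
    (hvl : v.length = k) (hw : NonDec w) :
    (∃ m : List ℕ, NonDec m ∧ m.length = k ∧ w = Xhat v m) ↔ w ∈ XmaxSet v := by
  have hv : v ≠ [] := by rintro rfl; simp at hvl; omega
  subst hvl
  rw [exists_nonDec_Xhat_eq_iff hw, mem_XmaxSet_iff_take_eq hv hw]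

/-- characterization of the members of `X_v^max`. -/
theorem mem_XmaxSet_iff (k : ℕ) (hk : 2 ≤ k) (v w : List ℕ)
    (hv : NonDec v) (hvl : v.length = k)
    (hw : NonDec w) (hwl : w.length = k) :
    (∃ m : List ℕ, NonDec m ∧ m.length = k ∧ w = Xhat v m) ↔ w ∈ XmaxSet v :=
  mem_XmaxSet_iff_general k hk v w hvl hw
end

section
/- If w ∈ X_v^max, then X_w^max ⊆ X_v^max. -/
/-!
The key fact is that `w ∈ X_v^max` forces `n_k ≤ w_k`: either some entry of the nondecreasing `w`
exceeds `n_k`, or `w = v`. Now if `u` agrees with `w` on the first `j` entries and `w` agrees with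
`v` on the first `i`, then `u` agrees with `v` on the first `min i j` entries, and the next entry
of `u` exceeds `n_k`: for `j ≤ i` because it exceeds `w_k ≥ n_k`, for `i < j` because it is the
entry of `w` that exceeds `n_k`. The cases where a first entry is already large go the same way.
-/

namespace NonDec

theorem le_getLast! {l : List ℕ} (hl : NonDec l) {a : ℕ} (ha : a ∈ l) : a ≤ l.getLast! := by
  rw [List.getLast!_eq_getLast?_getD, List.getLast?_eq_some_getLast (List.ne_nil_of_mem ha)]
  exact (List.isChain_iff_pairwise.mp hl).rel_getLast ha

theorem headI_le_getLast! {l : List ℕ} (hl : NonDec l) : l.headI ≤ l.getLast! := by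
  cases l with
  | nil => rfl
  | cons a t => exact hl.le_getLast! List.mem_cons_self

theorem getD_le_getLast! {l : List ℕ} (hl : NonDec l) {i : ℕ} (hi : i < l.length) :
    l.getD i 0 ≤ l.getLast! := by
  rw [List.getD_eq_getElem _ _ hi]
  exact hl.le_getLast! (List.getElem_mem hi)

end NonDec

namespace List

variable {α : Type*} {u w : List α} {j : ℕ}

theorem getD_eq_getD_of_take_eq (h : u.take j = w.take j) {i : ℕ} (hij : i < j) (d : α) :
    u.getD i d = w.getD i d := by
  have := congrArg (·[i]?) h
  simp only [getElem?_take, hij, if_true] at this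
  simp only [getD_eq_getElem?_getD, this]

theorem headI_eq_of_take_eq [Inhabited α] (h : u.take j = w.take j) (hj : 0 < j) :
    u.headI = w.headI := by
  have := congrArg head? h
  simp only [head?_take, hj.ne', if_false] at this
  cases u <;> cases w <;> simp_all

theorem take_min_eq_of_take_eq (h : u.take j = w.take j) (i : ℕ) :
    u.take (min i j) = w.take (min i j) := by
  rw [← take_take, h, take_take]

end List

theorem getLast!_le_getLast!_of_mem_XmaxSet {v w : List ℕ} (hw : w ∈ XmaxSet v) :
    v.getLast! ≤ w.getLast! := by
  obtain ⟨hlen, hnd, hhead | ⟨i, -, hik, htake, hlt⟩⟩ := hw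
  · exact hhead.le.trans hnd.headI_le_getLast!
  rcases hik.lt_or_eq with hik | rfl
  · exact (hlt hik).le.trans (hnd.getD_le_getLast! (hlen ▸ hik))
  · rw [← hlen, List.take_length, hlen, List.take_length] at htake
    rw [htake]

theorem XmaxSet_subset_general (v w : List ℕ)
    (hw : w ∈ XmaxSet v) :
    XmaxSet w ⊆ XmaxSet v := by
  have hlast := getLast!_le_getLast!_of_mem_XmaxSet hw
  obtain ⟨hwl, -, hwv⟩ := hw
  rintro u ⟨hul, hund, huw⟩
  refine ⟨hul.trans hwl, hund, ?_⟩
  rcases huw with hhead | ⟨j, hj, -, hju, hjlt⟩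
  · exact .inl (hlast.trans_lt hhead)
  rcases hwv with hhead | ⟨i, hi, hik, hiw, hilt⟩
  · exact .inl (List.headI_eq_of_take_eq hju hj ▸ hhead)
  refine .inr ⟨min i j, le_min hi hj, (min_le_left i j).trans hik,
    (List.take_min_eq_of_take_eq hju i).trans (min_comm j i ▸ List.take_min_eq_of_take_eq hiw j),
    fun hlt => ?_⟩
  rcases lt_or_ge i j with hij | hji
  · rw [min_eq_left hij.le] at hlt ⊢
    rw [List.getD_eq_getD_of_take_eq hju hij]
    exact hilt hlt
  · rw [min_eq_right hji] at hlt ⊢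
    exact hlast.trans_lt (hjlt (hwl ▸ hlt))

/-- if `w ∈ X_v^max`, then `X_w^max ⊆ X_v^max`. -/
theorem XmaxSet_subset (k : ℕ) (v w : List ℕ)
    (hv : NonDec v) (hvl : v.length = k)
    (hw : w ∈ XmaxSet v) :
    XmaxSet w ⊆ XmaxSet v :=
  XmaxSet_subset_general v w hw
end

section
/- Let v ∈ ω^{[k]} and let s_1 ≺ s_2 ≺ … ≺ s_N be elements of ω^{≤k} of equal length strictly less than k with s_N ≺ v. Then there is at most one index i ≤ N such that X_v^max ∩ τ^k[s_i] ≠ ∅, where τ^k[s] = { w ∈ ω^{[k]} : s is an initial segment of w }. -/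
/-- The tree generated by `s`: all `w ∈ ω^{[k]}` having `s` as an initial segment. -/
def tau (k : ℕ) (s : List ℕ) : Set (List ℕ) :=
  { w | w.length = k ∧ NonDec w ∧ s <+: w }

/-!
If `w ∈ X_v^max` extends `t` and every entry of `t` is at most `n_k = last v`, then `t` is an
initial segment of `v`: the first clause of `X_v^max` would force `w_1 > n_k`, and in the second
the index `i` with `w_{i+1} > n_k` cannot fall inside `t`, so `t` lies within the common prefix
`(n_1,…,n_i)`. Each `s_i` is `≺ v`, hence has last entry `≤ n_k`; so every `s_i` meeting
`X_v^max` equals `v.take l`, and since `≺` is irreflexive there can be only one such index.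
-/

lemma NonDec.le_getLast!_s5 {l : List ℕ} (h : NonDec l) {a : ℕ} (ha : a ∈ l) : a ≤ l.getLast! := by
  rw [List.getLast!_eq_getLast?_getD, List.getLast?_eq_some_getLast (List.ne_nil_of_mem ha)]
  exact (List.isChain_iff_pairwise.mp h).rel_getLast ha

lemma prec.getLast!_le {s t : List ℕ} (h : prec s t) : s.getLast! ≤ t.getLast! := by
  rcases h with ⟨rfl, -⟩ | ⟨-, -, h | ⟨h, -⟩⟩
  · exact Nat.zero_le _
  · exact h.le
  · exact h.le

lemma prec_irrefl (s : List ℕ) : ¬ prec s s := by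
  rintro (⟨h, hne⟩ | ⟨-, -, h | ⟨-, h⟩⟩)
  · exact hne h
  · exact lt_irrefl _ h
  · exact irrefl_of (List.Lex (· < ·)) s h

lemma take_eq_take_of_mem_XmaxSet {v w : List ℕ} (hw : w ∈ XmaxSet v) {l : ℕ}
    (hl : l ≤ w.length) (hbound : ∀ a ∈ w.take l, a ≤ v.getLast!) : w.take l = v.take l := by
  obtain ⟨hwv, -, hhead | ⟨i, -, -, hwi, hnext⟩⟩ := hw
  · rcases l with _ | l
    · simp
    obtain ⟨a, w, rfl⟩ := List.exists_cons_of_length_pos (by omega : 0 < w.length)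
    exact absurd (hbound a (by simp)) (not_le.mpr hhead)
  rcases lt_or_ge i l with hil | hli
  · have hiw : i < w.length := by omega
    have hmem : w[i] ∈ w.take l := List.mem_take_iff_getElem.mpr ⟨i, by omega, rfl⟩
    have hlt := hnext (by omega)
    rw [List.getD_eq_getElem w 0 hiw] at hlt
    exact absurd (hbound _ hmem) (not_le.mpr hlt)
  · simpa [List.take_take, min_eq_left hli] using congrArg (List.take l) hwi

lemma prefix_eq_take_of_mem_XmaxSet {v t w : List ℕ} (ht : NonDec t)
    (hlast : t.getLast! ≤ v.getLast!) (hw : w ∈ XmaxSet v) (htw : t <+: w) :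
    t = v.take t.length := by
  have ht_eq : t = w.take t.length := List.prefix_iff_eq_take.mp htw
  calc t = w.take t.length := ht_eq
    _ = v.take t.length := take_eq_take_of_mem_XmaxSet hw htw.length_le fun a ha =>
        (ht.le_getLast!_s5 (ht_eq ▸ ha)).trans hlast

theorem XmaxSet_meets_at_most_one_tau_general (k N : ℕ)
    (s : Fin (N + 1) → List ℕ) (hnd : ∀ i, NonDec (s i))
    (l : ℕ) (hlen : ∀ i, (s i).length = l)
    (hmono : ∀ i j, i < j → prec (s i) (s j))
    (v : List ℕ)
    (hsv : prec (s (Fin.last N)) v) :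
    ∀ i j, (XmaxSet v ∩ tau k (s i)).Nonempty →
      (XmaxSet v ∩ tau k (s j)).Nonempty → i = j := by
  have hlast : ∀ i, (s i).getLast! ≤ v.getLast! := fun i => by
    rcases (Fin.le_last i).eq_or_lt with rfl | hi
    · exact hsv.getLast!_le
    · exact (hmono i _ hi).getLast!_le.trans hsv.getLast!_le
  have hmeet : ∀ i, (XmaxSet v ∩ tau k (s i)).Nonempty → s i = v.take l := by
    rintro i ⟨w, hw, -, -, htw⟩
    rw [← hlen i]
    exact prefix_eq_take_of_mem_XmaxSet (hnd i) (hlast i) hw htw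
  intro i j hi hj
  have hij : s i = s j := (hmeet i hi).trans (hmeet j hj).symm
  by_contra hne
  rcases lt_or_gt_of_ne hne with h | h
  · exact prec_irrefl _ (hij ▸ hmono i j h)
  · exact prec_irrefl _ (hij ▸ hmono j i h)

/-- for `s_1 ≺ ⋯ ≺ s_N` of equal length `< k` with `s_N ≺ v`,
at most one `i` satisfies `X_v^max ∩ τ^k[s_i] ≠ ∅`. -/
theorem XmaxSet_meets_at_most_one_tau (k N : ℕ) (hk : 1 ≤ k)
    (s : Fin (N + 1) → List ℕ) (hnd : ∀ i, NonDec (s i))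
    (l : ℕ) (hl : l < k) (hlen : ∀ i, (s i).length = l)
    (hmono : ∀ i j, i < j → prec (s i) (s j))
    (v : List ℕ) (hv : NonDec v) (hvl : v.length = k)
    (hsv : prec (s (Fin.last N)) v) :
    ∀ i j, (XmaxSet v ∩ tau k (s i)).Nonempty →
      (XmaxSet v ∩ tau k (s j)).Nonempty → i = j :=
  XmaxSet_meets_at_most_one_tau_general k N s hnd l hlen hmono v hsv
end

section
/- Every finite approximation E ∈ AR^k (an initial segment, under ≺, of the range on ω^{[k]} of some E_k-tree) with ≺-minimum v satisfies E ⊆ X_v^max. -/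
/-- An `E_k`-tree: a map on `ω^{≤k}` sending nondecreasing sequences of length `≤ k`
to nondecreasing sequences of the same length, preserving `≺` and initial segments. -/
def IsEkTree (k : ℕ) (X : List ℕ → List ℕ) : Prop :=
  (∀ s, NonDec s → s.length ≤ k → NonDec (X s) ∧ (X s).length = s.length) ∧
  (∀ s t, NonDec s → NonDec t → s.length ≤ k → t.length ≤ k →
    (prec s t → prec (X s) (X t)) ∧ (s <+: t → X s <+: X t))

/-- `E ∈ AR^k`: `E` is a finite `≺`-initial segment of the restriction to `ω^{[k]}`
of some `E_k`-tree. -/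
def memAR (k : ℕ) (E : Finset (List ℕ)) : Prop :=
  ∃ X : List ℕ → List ℕ, IsEkTree k X ∧
    (∀ e ∈ E, ∃ s, NonDec s ∧ s.length = k ∧ e = X s) ∧
    (∀ s, NonDec s → s.length = k → ∀ e ∈ E, prec (X s) e → X s ∈ E)

/-! The `≺`-least nondecreasing sequence of length `k` is `0^k`, so the minimum of `E` is
`v = X̂(0^k)`. Let `e = X̂(t) ∈ E` with `t ≠ 0^k`, and let `m > 0` be the first nonzero entry
of `t`, at position `i` (counting from 0), so that `t` begins with `0^i m`. As `X̂` preserves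
initial segments, `e` and `v` agree on their first `i` entries, namely on `X̂(0^i)`. For entry
`i` of `e`, first `0^k ≺ 0^(k-1) m`, and the images of these two sequences share the prefix
`X̂(0^(k-1))`, so their last entries satisfy `n_k < last X̂(0^(k-1) m)`. Then
`0^(k-1) m ⪯ 0^i m` (same last entry, lexicographically smaller), so
`last X̂(0^(k-1) m) ≤ last X̂(0^i m) = e_i`. -/

namespace List

variable {α : Type*}

theorem exists_take_succ_eq_replicate_append (a : α) :
    ∀ t : List α, t ≠ replicate t.length a →
      ∃ i b, i < t.length ∧ b ≠ a ∧ t.take (i + 1) = replicate i a ++ [b]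
  | [], h => absurd rfl h
  | c :: t, h => by
    by_cases hc : c = a
    · obtain ⟨i, b, hi, hb, ht⟩ :=
        exists_take_succ_eq_replicate_append a t (by simpa [hc, replicate_succ] using h)
      exact ⟨i + 1, b, by simpa using hi, hb, by simp [hc, ht, replicate_succ]⟩
    · exact ⟨0, c, by simp, hc, by simp⟩

theorem eq_take_append_getLast! [Inhabited α] {l : List α} {n : ℕ} (h : l.length = n + 1) :
    l = l.take n ++ [l.getLast!] := by
  have hne : l ≠ [] := ne_nil_of_length_eq_add_one h
  conv_lhs => rw [← dropLast_append_getLast hne]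
  simp [dropLast_eq_take, h, getLast?_eq_some_getLast hne]

theorem getI_eq_getLast!_take_succ [Inhabited α] {l : List α} {i : ℕ} (hi : i < l.length) :
    l.getI i = (l.take (i + 1)).getLast! := by
  rw [getLast!_eq_getElem!, getI_eq_getElem _ hi]
  simp [getElem!_pos, Nat.min_eq_left (Nat.succ_le_of_lt hi)]

end List

open List

theorem nonDec_iff_pairwise {l : List ℕ} : NonDec l ↔ l.Pairwise (· ≤ ·) := isChain_iff_pairwise

theorem nonDec_replicate (n a : ℕ) : NonDec (replicate n a) := by
  simp [nonDec_iff_pairwise, pairwise_replicate]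

theorem nonDec_replicate_zero_append (i m : ℕ) : NonDec (replicate i 0 ++ [m]) := by
  simp [nonDec_iff_pairwise, pairwise_append, pairwise_replicate]

theorem le_getLast!_of_nonDec {l : List ℕ} (hl : NonDec l) {x : ℕ} (hx : x ∈ l) :
    x ≤ l.getLast! := by
  have hne : l ≠ [] := ne_nil_of_mem hx
  rw [← dropLast_append_getLast hne, mem_append, mem_singleton] at hx
  rw [nonDec_iff_pairwise, ← dropLast_append_getLast hne, pairwise_append] at hl
  rw [getLast!_eq_getLast?_getD, getLast?_eq_some_getLast hne]
  rcases hx with hx | rfl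
  · exact hl.2.2 x hx _ (mem_singleton_self _)
  · rfl

theorem prec_asymm {s t : List ℕ} (hst : prec s t) (hts : prec t s) : False := by
  rcases hst with ⟨rfl, ht⟩ | ⟨hs, ht, hlt | ⟨heq, hlex⟩⟩ <;>
    rcases hts with ⟨rfl, _⟩ | ⟨_, _, hlt' | ⟨heq', hlex'⟩⟩
  all_goals first
    | contradiction
    | omega
    | exact (Lex.asymm (· < ·)).asymm _ _ hlex hlex'

theorem getLast!_le_of_prec {s t : List ℕ} (h : prec s t) (hs : s ≠ []) :
    s.getLast! ≤ t.getLast! := by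
  rcases h with ⟨h, _⟩ | ⟨_, _, h | ⟨h, _⟩⟩
  · exact absurd h hs
  · exact h.le
  · exact h.le

theorem prec_append_singleton_iff {u : List ℕ} {a b : ℕ} :
    prec (u ++ [a]) (u ++ [b]) ↔ a < b := by
  refine ⟨fun h => ?_, fun h => Or.inr ⟨by simp, by simp, Or.inl (by simpa using h)⟩⟩
  rcases h with ⟨h, _⟩ | ⟨_, _, h | ⟨heq, hlex⟩⟩
  · simp at h
  · simpa using h
  · obtain rfl : a = b := by simpa using heq
    exact absurd hlex (lex_irrefl (fun x => lt_irrefl x) _)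

theorem prec_replicate_append_of_lt {i j m : ℕ} (hij : i < j) (hm : 0 < m) :
    prec (replicate j 0 ++ [m]) (replicate i 0 ++ [m]) := by
  refine Or.inr ⟨by simp, by simp, Or.inr ⟨by simp, ?_⟩⟩
  obtain ⟨d, rfl⟩ := Nat.exists_eq_add_of_lt hij
  rw [add_assoc, replicate_add, replicate_succ, append_assoc, cons_append]
  exact Lex.append_left _ (Lex.rel hm) _

theorem prec_replicate_zero {t : List ℕ} (ht : NonDec t) (hne : t ≠ replicate t.length 0) :
    prec (replicate t.length 0) t := by
  have ht0 : t ≠ [] := by rintro rfl; exact hne rfl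
  have hlast : t.getLast! ≠ 0 := fun h0 =>
    hne (eq_replicate_iff.mpr ⟨rfl, fun x hx => by have := le_getLast!_of_nonDec ht hx; omega⟩)
  refine Or.inr ⟨by simpa using ht0, ht0, Or.inl ?_⟩
  rw [getLast!_eq_getLast?_getD, getLast?_replicate, if_neg (by simpa using ht0)]
  exact Nat.pos_of_ne_zero hlast

namespace IsEkTree

variable {k : ℕ} {X : List ℕ → List ℕ}

theorem nonDec_map (hX : IsEkTree k X) {s : List ℕ} (hs : NonDec s) (hsk : s.length ≤ k) :
    NonDec (X s) :=
  (hX.1 s hs hsk).1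

theorem length_map (hX : IsEkTree k X) {s : List ℕ} (hs : NonDec s) (hsk : s.length ≤ k) :
    (X s).length = s.length :=
  (hX.1 s hs hsk).2

theorem prec_map (hX : IsEkTree k X) {s t : List ℕ} (hs : NonDec s) (ht : NonDec t)
    (hsk : s.length ≤ k) (htk : t.length ≤ k) (h : prec s t) : prec (X s) (X t) :=
  (hX.2 s t hs ht hsk htk).1 h

theorem take_map (hX : IsEkTree k X) {s : List ℕ} (hs : NonDec s) (hsk : s.length ≤ k)
    (i : ℕ) : (X s).take i = X (s.take i) := by
  have hsi : (s.take i).length ≤ k := (length_take_le' i s).trans hsk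
  have hpre : X (s.take i) <+: X s :=
    (hX.2 _ _ (hs.take i) hs hsi hsk).2 (take_prefix i s)
  conv_rhs => rw [prefix_iff_eq_take.mp hpre]
  rw [hX.length_map (hs.take i) hsi, length_take, ← hX.length_map hs hsk, ← take_eq_take_min]

theorem map_append_singleton (hX : IsEkTree k X) {u : List ℕ} {a : ℕ} (hu : NonDec (u ++ [a]))
    (huk : u.length < k) : X (u ++ [a]) = X u ++ [(X (u ++ [a])).getLast!] := by
  have hlen : (X (u ++ [a])).length = u.length + 1 := by
    rw [hX.length_map hu (by simpa using huk), length_append, length_singleton]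
  conv_lhs => rw [eq_take_append_getLast! hlen]
  rw [hX.take_map hu (by simpa using huk), take_left]

theorem getLast!_map_lt (hX : IsEkTree k X) {u : List ℕ} {a b : ℕ} (ha : NonDec (u ++ [a]))
    (hb : NonDec (u ++ [b])) (huk : u.length < k) (hab : a < b) :
    (X (u ++ [a])).getLast! < (X (u ++ [b])).getLast! := by
  have h := hX.prec_map ha hb (by simpa using huk) (by simpa using huk)
    (prec_append_singleton_iff.mpr hab)
  rw [hX.map_append_singleton ha huk, hX.map_append_singleton hb huk] at h
  exact prec_append_singleton_iff.mp h

theorem getLast!_map_replicate_lt {n : ℕ} (hX : IsEkTree (n + 1) X) {i m : ℕ} (hi : i ≤ n)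
    (hm : 0 < m) : (X (replicate (n + 1) 0)).getLast! < (X (replicate i 0 ++ [m])).getLast! :=
  calc (X (replicate (n + 1) 0)).getLast!
    _ < (X (replicate n 0 ++ [m])).getLast! := by
      rw [replicate_succ']
      exact hX.getLast!_map_lt (nonDec_replicate_zero_append n 0)
        (nonDec_replicate_zero_append n m) (by simp) hm
    _ ≤ (X (replicate i 0 ++ [m])).getLast! := by
      rcases hi.lt_or_eq with hi | rfl
      · have hlen := hX.length_map (nonDec_replicate_zero_append n m) (by simp)
        refine getLast!_le_of_prec ?_ (ne_nil_of_length_pos (by simp [hlen]))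
        exact hX.prec_map (nonDec_replicate_zero_append n m) (nonDec_replicate_zero_append i m)
          (by simp) (by simp; omega) (prec_replicate_append_of_lt hi hm)
      · rfl

theorem map_replicate_zero_eq_of_isMin (hX : IsEkTree k X) {E : Finset (List ℕ)}
    (hinit : ∀ s, NonDec s → s.length = k → ∀ e ∈ E, prec (X s) e → X s ∈ E) {v : List ℕ}
    (hvE : v ∈ E) (hv : ∃ s, NonDec s ∧ s.length = k ∧ v = X s)
    (hmin : ∀ e ∈ E, e = v ∨ prec v e) : X (replicate k 0) = v := by
  obtain ⟨s, hs, rfl, rfl⟩ := hv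
  by_cases h : s = replicate s.length 0
  · rw [← h]
  have hzero : NonDec (replicate s.length 0) := nonDec_replicate _ _
  have hlt : prec (X (replicate s.length 0)) (X s) :=
    hX.prec_map hzero hs (by simp) le_rfl (prec_replicate_zero hs h)
  rcases hmin _ (hinit _ hzero (by simp) _ hvE hlt) with heq | hgt
  · exact heq
  · exact (prec_asymm hlt hgt).elim

end IsEkTree

/-- every `E ∈ AR^k` with `≺`-minimum `v` satisfies `E ⊆ X_v^max`. -/
theorem AR_subset_XmaxSet (k : ℕ) (hk : 1 ≤ k) (E : Finset (List ℕ)) (hE : memAR k E)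
    (v : List ℕ) (hvE : v ∈ E) (hmin : ∀ e ∈ E, e = v ∨ prec v e) :
    ∀ e ∈ E, e ∈ XmaxSet v := by
  obtain ⟨n, rfl⟩ : ∃ n, k = n + 1 := ⟨k - 1, by omega⟩
  obtain ⟨X, hX, hrange, hinit⟩ := hE
  obtain rfl := hX.map_replicate_zero_eq_of_isMin hinit hvE (hrange v hvE) hmin
  have hzero : NonDec (replicate (n + 1) 0) := nonDec_replicate _ _
  have hlen : (X (replicate (n + 1) 0)).length = n + 1 := by simp [hX.length_map hzero]
  rintro _ he
  obtain ⟨t, ht, htn, rfl⟩ := hrange _ he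
  refine ⟨by rw [hX.length_map ht htn.le, htn, hlen], hX.nonDec_map ht htn.le, ?_⟩
  by_cases ht0 : t = replicate (n + 1) 0
  · exact Or.inr ⟨n + 1, by omega, hlen.ge, by rw [ht0], by omega⟩
  obtain ⟨i, m, hi, hm, htake⟩ := exists_take_succ_eq_replicate_append 0 t (by rwa [htn])
  have hentry : (X (replicate (n + 1) 0)).getLast! < (X t).getI i := by
    rw [getI_eq_getLast!_take_succ (by rwa [hX.length_map ht htn.le]), hX.take_map ht htn.le,
      htake]
    exact hX.getLast!_map_replicate_lt (by omega) (Nat.pos_of_ne_zero hm)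
  have hprefix : (X t).take i = (X (replicate (n + 1) 0)).take i := by
    have htake_i : t.take i = replicate i 0 := by simpa [take_take] using congrArg (take i) htake
    rw [hX.take_map ht htn.le, hX.take_map hzero (by simp), htake_i, take_replicate,
      min_eq_left (by omega)]
  rcases i with _ | i
  · exact Or.inl (by rwa [← getI_zero_eq_headI])
  · exact Or.inr ⟨i + 1, by omega, by omega, hprefix, fun _ => hentry⟩
end

section
/- For every n ∈ ℕ and x ∈ c_00(ω^{[k]}), the implicit norm |x|_n equals the dual description |x|*_n = max{ f(x) : f ∈ K_n }, where K_0 = {±e_v* : v ∈ ω^{[k]}} and K_{n+1} = K_n ∪ { θ(f_1+…+f_m) : m ≤ d, f_i ∈ K_n with (supp f_i)_{i=1}^m almost admissible }. -/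
/-- `ω^{[k]}`: nondecreasing sequences of naturals of length exactly `k`. -/
abbrev Vec (k : ℕ) := {l : List ℕ // NonDec l ∧ l.length = k}

/-- Restriction `Ex` of a finitely supported vector to a set of coordinates. -/
noncomputable def restrict {k : ℕ} (E : Finset (Vec k)) (x : Vec k →₀ ℝ) : Vec k →₀ ℝ :=
  x.filter (fun v => v ∈ E)

/-- `A < B`: every element of `A` is `≺`-below every element of `B`. -/
def Successive {k : ℕ} (A B : Finset (Vec k)) : Prop :=
  ∀ a ∈ A, ∀ b ∈ B, prec a.1 b.1

/-- Membership in `AR^k` for finite sets of elements of `ω^{[k]}`. -/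
def memARV (k : ℕ) (E : Finset (Vec k)) : Prop :=
  memAR k (E.image Subtype.val)

/-- A `d`-admissible sequence: at most `d` many `≺`-successive members of `AR^k`. -/
def Admissible (k d : ℕ) {m : ℕ} (E : Fin m → Finset (Vec k)) : Prop :=
  m ≤ d ∧ (∀ i, memARV k (E i)) ∧ ∀ i j, i < j → Successive (E i) (E j)

/-- The nondecreasing sequence of norms `|x|_j` defining the Tsirelson-type norm:
`|x|_0 = max |x_v|`, and `|x|_{j+1}` is the max of `|x|_j` and
`θ ∑ |E_i x|_j` over admissible sequences `(E_i)_{i=1}^m`, `1 ≤ m ≤ d`. -/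
noncomputable def normSeq (k d : ℕ) (θ : ℝ) : ℕ → (Vec k →₀ ℝ) → ℝ
  | 0, x => ⨆ v, |x v|
  | j + 1, x => max (normSeq k d θ j x)
      (sSup { r | ∃ m : ℕ, 1 ≤ m ∧ ∃ E : Fin m → Finset (Vec k),
        Admissible k d E ∧ r = θ * ∑ i, normSeq k d θ j (restrict (E i) x) })

/-- The norm of `T_k(d,θ)` on finitely supported vectors. -/
noncomputable def tnorm (k d : ℕ) (θ : ℝ) (x : Vec k →₀ ℝ) : ℝ :=
  ⨆ j, normSeq k d θ j x

/-- An almost admissible sequence of finite subsets of `ω^{[k]}`. -/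
def AlmostAdmissible (k d : ℕ) {m : ℕ} (F : Fin m → Finset (Vec k)) : Prop :=
  ∃ E : Fin m → Finset (Vec k), Admissible k d E ∧ ∀ i, F i ⊆ E i

/-- The sets `K_n` of norming functionals. -/
noncomputable def Kset (k d : ℕ) (θ : ℝ) : ℕ → Set (Vec k →₀ ℝ)
  | 0 => { f | ∃ v, f = Finsupp.single v 1 ∨ f = -Finsupp.single v 1 }
  | n + 1 => Kset k d θ n ∪
      { f | ∃ m : ℕ, 1 ≤ m ∧ m ≤ d ∧ ∃ g : Fin m → (Vec k →₀ ℝ),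
        (∀ i, g i ∈ Kset k d θ n) ∧
        AlmostAdmissible k d (fun i => (g i).support) ∧
        f = θ • ∑ i, g i }

/-- The pairing `f(x)` of a functional with a vector. -/
noncomputable def pairF {k : ℕ} (f x : Vec k →₀ ℝ) : ℝ :=
  ∑ v ∈ f.support, f v * x v

/-!
Both sides are built by the same recursion, so one induction on `n` compares them. A functional
`θ (f_1 + ⋯ + f_m)` with `supp f_i ⊆ E_i` satisfies `f_i(x) = f_i(E_i x) ≤ |E_i x|_n`, which
gives `f(x) ≤ |x|_{n+1}`. Conversely, if `f_i ∈ K_n` nearly norms `E_i x`, then so does its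
restriction `E_i f_i`, and `θ (E_1 f_1 + ⋯ + E_m f_m)` lies in `K_{n+1}` once the zero terms are
discarded, because `K_n ∪ {0}` is closed under restriction to sets and a subfamily of an
admissible family is admissible.
-/

lemma sum_le_of_isLUB {ι : Type*} [Fintype ι] {A : ι → Set ℝ} {a : ι → ℝ}
    (ha : ∀ i, IsLUB (A i) (a i)) {B : ℝ}
    (hB : ∀ c : ι → ℝ, (∀ i, c i ∈ A i) → ∑ i, c i ≤ B) : ∑ i, a i ≤ B := by
  refine le_of_forall_pos_lt_add fun ε hε => ?_
  set δ := ε / (Fintype.card ι + 1)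
  have hδ : 0 < δ := by positivity
  have hcardδ : Fintype.card ι * δ < ε := by
    rw [← mul_div_assoc, div_lt_iff₀ (by positivity)]
    linarith
  choose c hcA hc using fun i => (ha i).exists_between (sub_lt_self (a i) hδ)
  calc ∑ i, a i ≤ ∑ i, (c i + δ) := Finset.sum_le_sum fun i _ => by linarith [(hc i).1]
    _ = ∑ i, c i + Fintype.card ι * δ := by simp [Finset.sum_add_distrib]
    _ < B + ε := by linarith [hB c hcA]

lemma bddAbove_range_abs_apply {α : Type*} (x : α →₀ ℝ) :
    BddAbove (Set.range fun v => |x v|) :=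
  Set.range_comp abs x ▸ (x.finite_range.image abs).bddAbove

instance (k : ℕ) : Nonempty (Vec k) :=
  ⟨⟨List.replicate k 0, List.isChain_replicate_of_rel k le_rfl, List.length_replicate⟩⟩

section Restrict

variable {k : ℕ}

lemma restrict_apply (E : Finset (Vec k)) (x : Vec k →₀ ℝ) (v : Vec k) :
    restrict E x v = if v ∈ E then x v else 0 :=
  Finsupp.filter_apply _ _ _

lemma abs_restrict_apply_le (E : Finset (Vec k)) (x : Vec k →₀ ℝ) (v : Vec k) :
    |restrict E x v| ≤ |x v| := by
  rw [restrict_apply]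
  split_ifs <;> simp

lemma support_restrict_subset (E : Finset (Vec k)) (x : Vec k →₀ ℝ) :
    (restrict E x).support ⊆ E :=
  fun _ hv => (Finset.mem_filter.1 hv).2

lemma support_restrict_subset_support (E : Finset (Vec k)) (x : Vec k →₀ ℝ) :
    (restrict E x).support ⊆ x.support :=
  Finset.filter_subset _ _

lemma restrict_eq_self {E : Finset (Vec k)} {x : Vec k →₀ ℝ} (h : x.support ⊆ E) :
    restrict E x = x :=
  (Finsupp.filter_eq_self_iff _ _).2 fun _ hv => h (Finsupp.mem_support_iff.2 hv)

lemma restrict_restrict (E F : Finset (Vec k)) (x : Vec k →₀ ℝ) :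
    restrict F (restrict E x) = restrict (F ∩ E) x := by
  ext v
  simp only [restrict_apply, Finset.mem_inter]
  split_ifs <;> tauto

lemma restrict_smul_sum {m : ℕ} (E : Finset (Vec k)) (c : ℝ) (g : Fin m → Vec k →₀ ℝ) :
    restrict E (c • ∑ i, g i) = c • ∑ i, restrict E (g i) := by
  simp only [restrict, Finsupp.filter_smul, Finsupp.filter_sum]

end Restrict

section Pairing

variable {k : ℕ}

lemma pairF_eq_linearCombination (f x : Vec k →₀ ℝ) :
    pairF f x = Finsupp.linearCombination ℝ x f := by
  simp [pairF, Finsupp.linearCombination_apply, Finsupp.sum]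

lemma pairF_zero (x : Vec k →₀ ℝ) : pairF 0 x = 0 := by
  simp [pairF]

lemma pairF_single (v : Vec k) (x : Vec k →₀ ℝ) : pairF (Finsupp.single v 1) x = x v := by
  simp [pairF_eq_linearCombination]

lemma pairF_neg_single (v : Vec k) (x : Vec k →₀ ℝ) :
    pairF (-Finsupp.single v 1) x = -x v := by
  simp [pairF_eq_linearCombination]

lemma pairF_smul_sum {m : ℕ} (c : ℝ) (g : Fin m → Vec k →₀ ℝ) (x : Vec k →₀ ℝ) :
    pairF (c • ∑ i, g i) x = c * ∑ i, pairF (g i) x := by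
  simp [pairF_eq_linearCombination]

lemma pairF_restrict (E : Finset (Vec k)) (f x : Vec k →₀ ℝ) :
    pairF f (restrict E x) = pairF (restrict E f) x := by
  rw [pairF, pairF, show (restrict E f).support = f.support.filter (· ∈ E) from rfl,
    Finset.sum_filter]
  refine Finset.sum_congr rfl fun v _ => ?_
  simp only [restrict_apply]
  split_ifs <;> simp

end Pairing

section Admissible

variable {k d : ℕ}

lemma Admissible.comp_strictMono {m l : ℕ} {E : Fin m → Finset (Vec k)}
    (hE : Admissible k d E) {φ : Fin l → Fin m} (hφ : StrictMono φ) :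
    Admissible k d (E ∘ φ) :=
  ⟨le_trans (by simpa using Fintype.card_le_of_injective φ hφ.injective) hE.1,
    fun _ => hE.2.1 _, fun _ _ hij => hE.2.2 _ _ (hφ hij)⟩

lemma AlmostAdmissible.comp_strictMono {m l : ℕ} {F : Fin m → Finset (Vec k)}
    (hF : AlmostAdmissible k d F) {φ : Fin l → Fin m} (hφ : StrictMono φ) :
    AlmostAdmissible k d (F ∘ φ) :=
  let ⟨E, hE, hFE⟩ := hF
  ⟨E ∘ φ, hE.comp_strictMono hφ, fun _ => hFE _⟩

lemma AlmostAdmissible.mono {m : ℕ} {F G : Fin m → Finset (Vec k)}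
    (hF : AlmostAdmissible k d F) (hGF : ∀ i, G i ⊆ F i) : AlmostAdmissible k d G :=
  let ⟨E, hE, hFE⟩ := hF
  ⟨E, hE, fun i => (hGF i).trans (hFE i)⟩

lemma AlmostAdmissible.length_le {m : ℕ} {F : Fin m → Finset (Vec k)}
    (hF : AlmostAdmissible k d F) : m ≤ d :=
  let ⟨_, hE, _⟩ := hF
  hE.1

end Admissible

section Kset

variable {k d : ℕ} {θ : ℝ}

lemma Kset_mono : Monotone (Kset k d θ) :=
  monotone_nat_of_le_succ fun _ => Set.subset_union_left

lemma smul_sum_mem_insert_zero_Kset_succ {n m : ℕ} {g : Fin m → Vec k →₀ ℝ}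
    (hg : ∀ i, g i ∈ insert 0 (Kset k d θ n))
    (hadm : AlmostAdmissible k d fun i => (g i).support) :
    θ • ∑ i, g i ∈ insert 0 (Kset k d θ (n + 1)) := by
  classical
  set t := Finset.univ.filter fun i => g i ≠ 0
  set e := t.orderEmbOfFin rfl
  have hsum : ∑ i, g i = ∑ l, g (e l) :=
    calc ∑ i, g i = ∑ i ∈ t, g i := (Finset.sum_filter_ne_zero _).symm
      _ = ∑ i ∈ Finset.univ.map e.toEmbedding, g i := by rw [Finset.map_orderEmbOfFin_univ]
      _ = ∑ l, g (e l) := Finset.sum_map _ _ _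
  rcases Nat.eq_zero_or_pos t.card with ht | ht
  · left
    rw [hsum, Finset.univ_eq_empty_iff.2 (by rw [ht]; exact Fin.isEmpty'), Finset.sum_empty,
      smul_zero]
  · have hsub : AlmostAdmissible k d fun l => (g (e l)).support :=
      hadm.comp_strictMono e.strictMono
    refine Or.inr (Or.inr
      ⟨t.card, ht, hsub.length_le, fun l => g (e l), fun l => ?_, hsub, hsum ▸ rfl⟩)
    exact (hg _).resolve_left (Finset.mem_filter.1 (t.orderEmbOfFin_mem rfl l)).2

lemma restrict_mem_insert_zero_Kset {n : ℕ} {f : Vec k →₀ ℝ} (hf : f ∈ Kset k d θ n)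
    (E : Finset (Vec k)) : restrict E f ∈ insert 0 (Kset k d θ n) := by
  induction n generalizing f with
  | zero =>
    obtain ⟨v, rfl | rfl⟩ := hf <;> by_cases hv : v ∈ E
    · exact Or.inr ⟨v, Or.inl (Finsupp.filter_single_of_pos _ hv)⟩
    · exact Or.inl (Finsupp.filter_single_of_neg _ hv)
    · exact Or.inr ⟨v, Or.inr (by
        rw [restrict, Finsupp.filter_neg, Finsupp.filter_single_of_pos _ hv])⟩
    · exact Or.inl (by
        rw [restrict, Finsupp.filter_neg, Finsupp.filter_single_of_neg _ hv, neg_zero])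
  | succ n ih =>
    rcases hf with hf | ⟨m, -, -, g, hg, hadm, rfl⟩
    · exact Set.insert_subset_insert (Kset_mono n.le_succ) (ih hf)
    · rw [restrict_smul_sum]
      exact smul_sum_mem_insert_zero_Kset_succ (fun i => ih (hg i))
        (hadm.mono fun i => support_restrict_subset_support E (g i))

end Kset

section Norm

variable {k d : ℕ} {θ : ℝ}

def admissibleSums (k d : ℕ) (θ : ℝ) (n : ℕ) (x : Vec k →₀ ℝ) : Set ℝ :=
  { r | ∃ m : ℕ, 1 ≤ m ∧ ∃ E : Fin m → Finset (Vec k),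
    Admissible k d E ∧ r = θ * ∑ i, normSeq k d θ n (restrict (E i) x) }

lemma normSeq_succ (n : ℕ) (x : Vec k →₀ ℝ) :
    normSeq k d θ (n + 1) x = max (normSeq k d θ n x) (sSup (admissibleSums k d θ n x)) :=
  rfl

lemma normSeq_nonneg (n : ℕ) (x : Vec k →₀ ℝ) : 0 ≤ normSeq k d θ n x := by
  induction n with
  | zero => exact Real.iSup_nonneg fun _ => abs_nonneg _
  | succ n ih => exact ih.trans (le_max_left _ _)

lemma mem_upperBounds_admissibleSums (hθ : 0 ≤ θ) {n : ℕ} {x : Vec k →₀ ℝ} {B : ℝ}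
    (hB0 : 0 ≤ B) (hB : ∀ E, normSeq k d θ n (restrict E x) ≤ B) :
    θ * (d * B) ∈ upperBounds (admissibleSums k d θ n x) := by
  rintro r ⟨m, -, E, hE, rfl⟩
  gcongr
  calc ∑ i, normSeq k d θ n (restrict (E i) x) ≤ ∑ _i : Fin m, B :=
        Finset.sum_le_sum fun i _ => hB _
    _ = m * B := by simp
    _ ≤ d * B := by gcongr; exact_mod_cast hE.1

lemma exists_forall_normSeq_restrict_le (hθ : 0 ≤ θ) (n : ℕ) (x : Vec k →₀ ℝ) :
    ∃ B, 0 ≤ B ∧ ∀ E, normSeq k d θ n (restrict E x) ≤ B := by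
  induction n with
  | zero =>
    exact ⟨normSeq k d θ 0 x, normSeq_nonneg 0 x, fun E =>
      ciSup_mono (bddAbove_range_abs_apply x) fun v => abs_restrict_apply_le E x v⟩
  | succ n ih =>
    obtain ⟨B, hB0, hB⟩ := ih
    refine ⟨max B (θ * (d * B)), le_max_of_le_left hB0, fun E => max_le_max (hB E) ?_⟩
    refine Real.sSup_le (mem_upperBounds_admissibleSums hθ hB0 fun F => ?_) (by positivity)
    rw [restrict_restrict]
    exact hB _

lemma bddAbove_admissibleSums (hθ : 0 ≤ θ) (n : ℕ) (x : Vec k →₀ ℝ) :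
    BddAbove (admissibleSums k d θ n x) :=
  let ⟨_, hB0, hB⟩ := exists_forall_normSeq_restrict_le hθ n x
  ⟨_, mem_upperBounds_admissibleSums hθ hB0 hB⟩

lemma pairF_le_normSeq (hθ : 0 ≤ θ) {n : ℕ} {f : Vec k →₀ ℝ} (hf : f ∈ Kset k d θ n)
    (x : Vec k →₀ ℝ) : pairF f x ≤ normSeq k d θ n x := by
  induction n generalizing f x with
  | zero =>
    obtain ⟨v, rfl | rfl⟩ := hf
    · rw [pairF_single]
      exact (le_abs_self _).trans (le_ciSup (bddAbove_range_abs_apply x) v)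
    · rw [pairF_neg_single]
      exact (neg_le_abs _).trans (le_ciSup (bddAbove_range_abs_apply x) v)
  | succ n ih =>
    rw [normSeq_succ]
    rcases hf with hf | ⟨m, hm, -, g, hg, ⟨E, hE, hgE⟩, rfl⟩
    · exact (ih hf x).trans (le_max_left _ _)
    refine le_max_of_le_right (le_csSup_of_le (bddAbove_admissibleSums hθ n x)
      ⟨m, hm, E, hE, rfl⟩ ?_)
    rw [pairF_smul_sum]
    gcongr with i
    calc pairF (g i) x = pairF (g i) (restrict (E i) x) := by
          rw [pairF_restrict, restrict_eq_self (hgE i)]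
      _ ≤ normSeq k d θ n (restrict (E i) x) := ih (hg i) _

lemma admissibleSums_le_of_isLUB (hθ : 0 < θ) {n : ℕ} {x : Vec k →₀ ℝ}
    (ih : ∀ y, IsLUB {r | ∃ f ∈ Kset k d θ n, r = pairF f y} (normSeq k d θ n y)) {b : ℝ}
    (hb : b ∈ upperBounds {r | ∃ f ∈ Kset k d θ (n + 1), r = pairF f x}) (hb0 : 0 ≤ b) :
    b ∈ upperBounds (admissibleSums k d θ n x) := by
  rintro r ⟨m, -, E, hE, rfl⟩
  rw [← le_div_iff₀' hθ]
  refine sum_le_of_isLUB (fun i => ih (restrict (E i) x)) fun c hc => ?_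
  choose f hf hfc using hc
  have hmem : θ • ∑ i, restrict (E i) (f i) ∈ insert 0 (Kset k d θ (n + 1)) :=
    smul_sum_mem_insert_zero_Kset_succ (fun i => restrict_mem_insert_zero_Kset (hf i) _)
      ⟨E, hE, fun i => support_restrict_subset _ _⟩
  have hle : pairF (θ • ∑ i, restrict (E i) (f i)) x ≤ b := by
    rcases hmem with h | h
    · rwa [h, pairF_zero]
    · exact hb ⟨_, h, rfl⟩
  rw [le_div_iff₀' hθ]
  simpa only [pairF_smul_sum, ← pairF_restrict, ← hfc] using hle

theorem isLUB_pairF_Kset (hθ : 0 < θ) (n : ℕ) (x : Vec k →₀ ℝ) :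
    IsLUB {r | ∃ f ∈ Kset k d θ n, r = pairF f x} (normSeq k d θ n x) := by
  have upper :
      ∀ j y, normSeq k d θ j y ∈ upperBounds {r | ∃ f ∈ Kset k d θ j, r = pairF f y} :=
    fun _ y _ ⟨f, hf, hr⟩ => hr ▸ pairF_le_normSeq hθ.le hf y
  induction n generalizing x with
  | zero =>
    refine ⟨upper 0 x, fun b hb => ciSup_le fun v => abs_le'.2 ⟨?_, ?_⟩⟩
    · exact pairF_single v x ▸ hb ⟨_, ⟨v, Or.inl rfl⟩, rfl⟩
    · exact pairF_neg_single v x ▸ hb ⟨_, ⟨v, Or.inr rfl⟩, rfl⟩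
  | succ n ih =>
    refine ⟨upper (n + 1) x, fun b hb => ?_⟩
    have hxb : normSeq k d θ n x ≤ b :=
      (ih x).2 fun r ⟨f, hf, hr⟩ => hb ⟨f, Kset_mono n.le_succ hf, hr⟩
    have hb0 : 0 ≤ b := (normSeq_nonneg n x).trans hxb
    exact max_le hxb (Real.sSup_le (admissibleSums_le_of_isLUB hθ ih hb hb0) hb0)

end Norm

theorem normSeq_eq_dual_general (k d : ℕ) (θ : ℝ) (hθ0 : 0 < θ)
    (n : ℕ) (x : Vec k →₀ ℝ) :
    normSeq k d θ n x = sSup { r | ∃ f ∈ Kset k d θ n, r = pairF f x } :=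
  ((isLUB_pairF_Kset hθ0 n x).csSup_eq
    ⟨_, _, Kset_mono n.zero_le ⟨Classical.arbitrary _, Or.inl rfl⟩, rfl⟩).symm

/-- the implicit norms agree with their dual description:
`|x|_n = max { f(x) : f ∈ K_n }`. -/
theorem normSeq_eq_dual (k d : ℕ) (hd : 1 ≤ d) (θ : ℝ) (hθ0 : 0 < θ) (hθ1 : θ < 1)
    (n : ℕ) (x : Vec k →₀ ℝ) :
    normSeq k d θ n x = sSup { r | ∃ f ∈ Kset k d θ n, r = pairF f x } :=
  normSeq_eq_dual_general k d θ hθ0 n x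
end

section
/- Let s = (a_1,…,a_l) ∈ ω^{≤k} with l < k, let m > a_l, and set v = s⌢(m,m,…,m) ∈ ω^{[k]}. Then X_v^max ∩ τ^k[s] = ⋃_{j=m}^∞ τ^k[s⌢j]. -/
namespace NonDec

variable {w : List ℕ}

lemma getD_mono (hw : NonDec w) {i j : ℕ} (hij : i ≤ j) (hj : j < w.length) :
    w.getD i 0 ≤ w.getD j 0 := by
  rcases hij.eq_or_lt with rfl | hlt
  · exact le_rfl
  · rw [List.getD_eq_getElem _ _ (hij.trans_lt hj), List.getD_eq_getElem _ _ hj]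
    exact List.pairwise_iff_getElem.mp hw.pairwise _ _ _ _ hlt

lemma headI_le (hw : NonDec w) {x : ℕ} (hx : x ∈ w) : w.headI ≤ x := by
  obtain _ | ⟨a, t⟩ := w
  · simp at hx
  · obtain rfl | hx := List.mem_cons.mp hx
    · exact le_rfl
    · exact List.rel_of_pairwise_cons hw.pairwise hx

end NonDec

lemma List.getLast!_append_replicate {α : Type*} [Inhabited α] (s : List α) {n : ℕ} (hn : n ≠ 0)
    (m : α) :
    (s ++ List.replicate n m).getLast! = m := by
  obtain ⟨n, rfl⟩ := Nat.exists_eq_succ_of_ne_zero hn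
  rw [List.replicate_succ', ← List.append_assoc, List.getLast!_eq_getLast?_getD]
  simp

lemma List.exists_take_eq_replicate_and_lt_getD {α : Type*} [PartialOrder α] {m : α} (d : α) :
    ∀ {u : List α}, (∀ x ∈ u, m ≤ x) →
      ∃ i ≤ u.length, u.take i = List.replicate i m ∧ (i < u.length → m < u.getD i d)
  | [], _ => ⟨0, le_rfl, rfl, fun h => absurd h (lt_irrefl 0)⟩
  | a :: u, hu => by
    obtain rfl | ha := (hu a List.mem_cons_self).eq_or_lt
    · obtain ⟨i, hi, htake, hlt⟩ :=
        exists_take_eq_replicate_and_lt_getD d fun x hx => hu x (List.mem_cons_of_mem _ hx)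
      exact ⟨i + 1, by simpa, by simp [htake, List.replicate_succ], by simpa using hlt⟩
    · exact ⟨0, by simp, rfl, fun _ => ha⟩

section

variable {k m : ℕ} {s w : List ℕ}

lemma mem_tau_append_singleton_iff (hlen : s.length < k) (j : ℕ) :
    w ∈ tau k (s ++ [j]) ↔ w ∈ tau k s ∧ w.getD s.length 0 = j := by
  constructor
  · rintro ⟨hwk, hw, t, rfl⟩
    refine ⟨⟨hwk, hw, (s.prefix_append [j]).trans (List.prefix_append _ t)⟩, ?_⟩
    simp
  · rintro ⟨⟨hwk, hw, _ | ⟨a, t⟩, rfl⟩, rfl⟩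
    · simp only [List.append_nil] at hwk; omega
    · exact ⟨hwk, hw, t, by simp⟩

lemma mem_XmaxSet_append_replicate_iff (hlen : s.length < k) (hw : w ∈ tau k s) :
    w ∈ XmaxSet (s ++ List.replicate (k - s.length) m) ↔ m ≤ w.getD s.length 0 := by
  obtain ⟨hwk, hw, _ | ⟨a, t⟩, rfl⟩ := hw
  · simp only [List.append_nil] at hwk; omega
  have hvlen : (s ++ List.replicate (k - s.length) m).length = k := by
    simp only [List.length_append, List.length_replicate]; omega
  have hvlast := List.getLast!_append_replicate s (n := k - s.length) (by omega) m
  have hwl : (s ++ a :: t).getD s.length 0 = a := by simp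
  simp only [XmaxSet, Set.mem_ofPred_eq, hvlen, hvlast, hwl]
  constructor
  · rintro ⟨-, -, hhead | ⟨i, -, -, htake, hlt⟩⟩
    · exact hhead.le.trans (hw.headI_le (by simp))
    rcases le_or_gt i s.length with hi | hi
    · exact (hlt (by omega)).le.trans (by simpa using hw.getD_mono hi (by simp))
    · have := congrArg (fun l => l.getD s.length 0) htake
      simp [hi, hlen] at this
      omega
  · intro ha
    have hu : ∀ x ∈ a :: t, m ≤ x := fun x hx =>
      ha.trans (NonDec.headI_le (List.IsChain.right_of_append hw) hx)
    obtain ⟨i, hiu, htake, hlt⟩ := List.exists_take_eq_replicate_and_lt_getD 0 hu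
    have hwk' : s.length + (t.length + 1) = k := by simpa using hwk
    refine ⟨hwk, hw, ?_⟩
    rcases Nat.eq_zero_or_pos (s.length + i) with h0 | hpos
    · obtain ⟨rfl, rfl⟩ : s = [] ∧ i = 0 := ⟨List.length_eq_zero_iff.mp (by omega), by omega⟩
      exact Or.inl (by simpa using hlt (by simp))
    · refine Or.inr ⟨s.length + i, hpos, by rw [List.length_cons] at hiu; omega, ?_, fun hik => ?_⟩
      · rw [List.take_length_add_append, List.take_length_add_append, htake, List.take_replicate,
          min_eq_left (by rw [List.length_cons] at hiu; omega)]
      · rw [List.getD_append_right _ _ _ _ (by omega), Nat.add_sub_cancel_left]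
        exact hlt (by rw [List.length_cons]; omega)

end

theorem XmaxSet_inter_tau_general (k : ℕ) (s : List ℕ) (hlen : s.length < k) (m : ℕ) :
    XmaxSet (s ++ List.replicate (k - s.length) m) ∩ tau k s =
      ⋃ j : ℕ, ⋃ _ : m ≤ j, tau k (s ++ [j]) := by
  ext w
  simp only [Set.mem_inter_iff, Set.mem_iUnion, mem_tau_append_singleton_iff hlen, exists_prop]
  constructor
  · rintro ⟨hX, hw⟩
    exact ⟨_, (mem_XmaxSet_append_replicate_iff hlen hw).mp hX, hw, rfl⟩
  · rintro ⟨j, hj, hw, rfl⟩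
    exact ⟨(mem_XmaxSet_append_replicate_iff hlen hw).mpr hj, hw⟩

/-- for `s = (a_1,…,a_l)` with `l < k`, `m > a_l`, and
`v = s⌢(m,…,m) ∈ ω^{[k]}`, we have `X_v^max ∩ τ^k[s] = ⋃_{j ≥ m} τ^k[s⌢j]`. -/
theorem XmaxSet_inter_tau (k : ℕ) (s : List ℕ) (hs : NonDec s) (hne : s ≠ [])
    (hlen : s.length < k) (m : ℕ) (hm : s.getLast! < m) :
    XmaxSet (s ++ List.replicate (k - s.length) m) ∩ tau k s =
      ⋃ j : ℕ, ⋃ _ : m ≤ j, tau k (s ++ [j]) :=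
  XmaxSet_inter_tau_general k s hlen m
end
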